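/- Let k be a field of characteristic 0. The quotient k-algebra k[a, c, d, e, f]/(c·e − d·f, d² − a·e, c·d − a·f, d − e² + f², a − d·e + c·f) is isomorphic, as a k-algebra, to k[c, e, f]/(c·e − e²·f + f³), via the map sending c ↦ c, e ↦ e, f ↦ f, d ↦ e² − f², and a ↦ e³ − e·f² − c·f. -/

import Mathlib

/-! Solving the last two generators for `d = e² − f²` and `a = de − cf = e³ − ef² − cf` eliminates
`a` and `d`; after this substitution the first generator becomes `ce − e²f + f³`, and the second
and third become its multiples by `f` and `e`. So the substitution and the inclusion of `c, e, f`
induce mutually inverse algebra maps between the two quotients. -/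

open MvPolynomial

namespace Stmt6

variable (k : Type*) [Field k]

/-- The ideal of `k[a,c,d,e,f]` (variables indexed `a=0, c=1, d=2, e=3, f=4`) generated by
`ce − df`, `d² − ae`, `cd − af`, `d − e² + f²`, `a − de + cf`. -/
noncomputable abbrev I₁ : Ideal (MvPolynomial (Fin 5) k) :=
  Ideal.span {X 1 * X 3 - X 2 * X 4,
    X 2 ^ 2 - X 0 * X 3,
    X 1 * X 2 - X 0 * X 4,
    X 2 - X 3 ^ 2 + X 4 ^ 2,
    X 0 - X 2 * X 3 + X 1 * X 4}

/-- The ideal of `k[c,e,f]` (variables indexed `c=0, e=1, f=2`) generated by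
`ce − e²f + f³`. -/
noncomputable abbrev I₂ : Ideal (MvPolynomial (Fin 3) k) :=
  Ideal.span {X 0 * X 1 - X 1 ^ 2 * X 2 + X 2 ^ 3}

end Stmt6

namespace MvPolynomial

variable {R σ τ : Type*} [CommRing R] {I : Ideal (MvPolynomial σ R)}
  {J : Ideal (MvPolynomial τ R)} {v : σ → MvPolynomial τ R} {w : τ → MvPolynomial σ R}

theorem quotientMapₐ_aeval_comp_quotientMapₐ_aeval (hv : I ≤ J.comap (aeval v))
    (hw : J ≤ I.comap (aeval w)) (hwv : ∀ j, aeval v (w j) - X j ∈ J) :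
    (Ideal.quotientMapₐ J (aeval v) hv : MvPolynomial σ R ⧸ I →ₐ[R] MvPolynomial τ R ⧸ J).comp
      (Ideal.quotientMapₐ I (aeval w) hw) = AlgHom.id R _ := by
  refine Ideal.Quotient.algHom_ext _ (algHom_ext fun j => ?_)
  simp only [AlgHom.comp_apply, Ideal.Quotient.mkₐ_eq_mk, Ideal.quotient_map_mkₐ, aeval_X,
    AlgHom.id_apply]
  exact Ideal.Quotient.eq.2 (hwv j)

noncomputable def quotientAlgEquivOfAeval (hv : I ≤ J.comap (aeval v))
    (hw : J ≤ I.comap (aeval w)) (hvw : ∀ i, aeval w (v i) - X i ∈ I)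
    (hwv : ∀ j, aeval v (w j) - X j ∈ J) :
    (MvPolynomial σ R ⧸ I) ≃ₐ[R] (MvPolynomial τ R ⧸ J) :=
  AlgEquiv.ofAlgHom (Ideal.quotientMapₐ J (aeval v) hv) (Ideal.quotientMapₐ I (aeval w) hw)
    (quotientMapₐ_aeval_comp_quotientMapₐ_aeval hv hw hwv)
    (quotientMapₐ_aeval_comp_quotientMapₐ_aeval hw hv hvw)

@[simp]
theorem quotientAlgEquivOfAeval_mk (hv : I ≤ J.comap (aeval v))
    (hw : J ≤ I.comap (aeval w)) (hvw : ∀ i, aeval w (v i) - X i ∈ I)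
    (hwv : ∀ j, aeval v (w j) - X j ∈ J) (p : MvPolynomial σ R) :
    quotientAlgEquivOfAeval hv hw hvw hwv (Ideal.Quotient.mk I p) =
      Ideal.Quotient.mk J (aeval v p) :=
  rfl

end MvPolynomial

namespace Stmt6

variable (k : Type*) [Field k]

noncomputable def eliminateAD : Fin 5 → MvPolynomial (Fin 3) k :=
  ![X 1 ^ 3 - X 1 * X 2 ^ 2 - X 0 * X 2, X 0, X 1 ^ 2 - X 2 ^ 2, X 1, X 2]

noncomputable def coordsCEF : Fin 3 → MvPolynomial (Fin 5) k :=
  ![X 1, X 3, X 4]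

theorem I₁_le_comap_aeval_eliminateAD : I₁ k ≤ (I₂ k).comap (aeval (eliminateAD k)) := by
  rw [Ideal.span_le]
  intro q hq
  rw [SetLike.mem_coe, Ideal.mem_comap]
  apply Ideal.mem_span_singleton'.2
  simp only [Set.mem_insert_iff, Set.mem_singleton_iff] at hq
  rcases hq with rfl | rfl | rfl | rfl | rfl
  exacts [⟨1, by simp [eliminateAD]; ring⟩, ⟨X 2, by simp [eliminateAD]; ring⟩,
    ⟨X 1, by simp [eliminateAD]; ring⟩, ⟨0, by simp [eliminateAD]⟩,
    ⟨0, by simp [eliminateAD]; ring⟩]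

theorem I₂_le_comap_aeval_coordsCEF : I₂ k ≤ (I₁ k).comap (aeval (coordsCEF k)) := by
  rw [Ideal.span_le, Set.singleton_subset_iff, SetLike.mem_coe, Ideal.mem_comap]
  have h : aeval (coordsCEF k) (X 0 * X 1 - X 1 ^ 2 * X 2 + X 2 ^ 3 : MvPolynomial (Fin 3) k) =
      (X 1 * X 3 - X 2 * X 4) + X 4 * (X 2 - X 3 ^ 2 + X 4 ^ 2) := by
    simp [coordsCEF]; ring
  rw [h]
  exact add_mem (Ideal.subset_span (by simp))
    (Ideal.mul_mem_left _ _ (Ideal.subset_span (by simp)))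

theorem aeval_coordsCEF_eliminateAD_sub_X_mem (i : Fin 5) :
    aeval (coordsCEF k) (eliminateAD k i) - X i ∈ I₁ k := by
  fin_cases i
  · show aeval (coordsCEF k) (eliminateAD k 0) - X 0 ∈ I₁ k
    have h : aeval (coordsCEF k) (eliminateAD k 0) - X 0 =
        -((X 0 - X 2 * X 3 + X 1 * X 4) + X 3 * (X 2 - X 3 ^ 2 + X 4 ^ 2)) := by
      simp [eliminateAD, coordsCEF]; ring
    rw [h]
    exact neg_mem (add_mem (Ideal.subset_span (by simp))
      (Ideal.mul_mem_left _ _ (Ideal.subset_span (by simp))))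
  · simp [eliminateAD, coordsCEF]
  · show aeval (coordsCEF k) (eliminateAD k 2) - X 2 ∈ I₁ k
    have h : aeval (coordsCEF k) (eliminateAD k 2) - X 2 = -(X 2 - X 3 ^ 2 + X 4 ^ 2) := by
      simp [eliminateAD, coordsCEF]; ring
    rw [h]
    exact neg_mem (Ideal.subset_span (by simp))
  all_goals simp [eliminateAD, coordsCEF]

theorem aeval_eliminateAD_coordsCEF (j : Fin 3) :
    aeval (eliminateAD k) (coordsCEF k j) = X j := by
  fin_cases j <;> simp [eliminateAD, coordsCEF]

end Stmt6

theorem stmt6_general (k : Type*) [Field k] :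
    ∃ Φ : (MvPolynomial (Fin 5) k ⧸ Stmt6.I₁ k) ≃ₐ[k]
        (MvPolynomial (Fin 3) k ⧸ Stmt6.I₂ k),
      ∀ p : MvPolynomial (Fin 5) k,
        Φ (Ideal.Quotient.mk (Stmt6.I₁ k) p) =
          aeval
            ![Ideal.Quotient.mk (Stmt6.I₂ k) (X 1 ^ 3 - X 1 * X 2 ^ 2 - X 0 * X 2),
              Ideal.Quotient.mk (Stmt6.I₂ k) (X 0),
              Ideal.Quotient.mk (Stmt6.I₂ k) (X 1 ^ 2 - X 2 ^ 2),
              Ideal.Quotient.mk (Stmt6.I₂ k) (X 1),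
              Ideal.Quotient.mk (Stmt6.I₂ k) (X 2)] p := by
  refine ⟨quotientAlgEquivOfAeval (Stmt6.I₁_le_comap_aeval_eliminateAD k)
    (Stmt6.I₂_le_comap_aeval_coordsCEF k) (Stmt6.aeval_coordsCEF_eliminateAD_sub_X_mem k)
    (fun j => by rw [Stmt6.aeval_eliminateAD_coordsCEF, sub_self]; exact zero_mem _),
    fun p => ?_⟩
  rw [quotientAlgEquivOfAeval_mk, ← Ideal.Quotient.mkₐ_eq_mk k, comp_aeval_apply]
  congr 2
  funext i
  fin_cases i <;> rfl

/-- Lemma 5.8 (Claim:onX), local coordinate ring at the `A₂`-singularity: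
`k[a,c,d,e,f]/(ce − df, d² − ae, cd − af, d − e² + f², a − de + cf)` is isomorphic as a
`k`-algebra to `k[c,e,f]/(ce − e²f + f³)` via `c ↦ c`, `e ↦ e`, `f ↦ f`, `d ↦ e² − f²`,
`a ↦ e³ − ef² − cf`. -/
theorem stmt6 (k : Type*) [Field k] [CharZero k] :
    ∃ Φ : (MvPolynomial (Fin 5) k ⧸ Stmt6.I₁ k) ≃ₐ[k]
        (MvPolynomial (Fin 3) k ⧸ Stmt6.I₂ k),
      ∀ p : MvPolynomial (Fin 5) k,
        Φ (Ideal.Quotient.mk (Stmt6.I₁ k) p) =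
          aeval
            ![Ideal.Quotient.mk (Stmt6.I₂ k) (X 1 ^ 3 - X 1 * X 2 ^ 2 - X 0 * X 2),
              Ideal.Quotient.mk (Stmt6.I₂ k) (X 0),
              Ideal.Quotient.mk (Stmt6.I₂ k) (X 1 ^ 2 - X 2 ^ 2),
              Ideal.Quotient.mk (Stmt6.I₂ k) (X 1),
              Ideal.Quotient.mk (Stmt6.I₂ k) (X 2)] p :=
  stmt6_general k
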